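/- For all integers n ≥ 0 and k ≥ 1: C(n+1, k)_F = Σ ((t_1+⋯+t_k)! / (t_1! ⋯ t_k!)) · (−1)^{k(k−1)/2 + k − (t_1+⋯+t_k)} · ∏_{j=1}^{k} (C(n+j, n)_F)^{t_j}, where the sum ranges over all tuples (t_1, …, t_k) of nonnegative integers satisfying t_1 + 2t_2 + ⋯ + k t_k = k. -/

import Mathlib

/-!
The `n + 1` numbers `φ ^ (n - i) * ψ ^ i` (`0 ≤ i ≤ n`) have complete homogeneous symmetric
functions `h_j = C(n + j, n)_F` and elementary symmetric functions
`e_k = (-1) ^ (k (k - 1) / 2) * C(n + 1, k)_F`, so that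
`(∑ (-1) ^ k e_k X ^ k) * (∑ h_j X ^ j) = 1`.
This identity of power series is checked by induction on `n`: passing from `n` to `n + 1`
rescales `X` by `ψ` and adjoins the number `φ ^ (n + 1)`, which is the golden-ratio form of the
Pascal rule for Fibonomials. Writing `∑ h_j X ^ j = 1 - B`, the inverse is the geometric series
`∑ B ^ m`, and expanding `B ^ m` by the multinomial theorem gives the sum over the tuples `t`.
-/

/-- The Fibonomial coefficient `C(n,k)_F = ∏_{r=1}^{k} F_{n-r+1}/F_r`, as a real number.
It equals `0` when `k > n` and `1` when `k = 0`. -/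
noncomputable def fibonomial (n k : ℕ) : ℝ :=
  ∏ r ∈ Finset.range k, (Nat.fib (n - r) : ℝ) / (Nat.fib (r + 1) : ℝ)

open Finset PowerSeries
open scoped goldenRatio

theorem Nat.cast_multinomial {ι K : Type*} [Field K] [CharZero K] (s : Finset ι)
    (f : ι → ℕ) :
    (Nat.multinomial s f : K) =
      ((∑ i ∈ s, f i).factorial : K) / ∏ i ∈ s, ((f i).factorial : K) := by
  rw [eq_div_iff (prod_ne_zero_iff.2 fun i _ => Nat.cast_ne_zero.2 (Nat.factorial_ne_zero _)),
    ← Nat.cast_prod, ← Nat.cast_mul, mul_comm, Nat.multinomial_spec]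

theorem neg_one_pow_sq {R : Type*} [Monoid R] [HasDistribNeg R] (n : ℕ) :
    ((-1 : R) ^ n) ^ 2 = 1 := by
  rw [← pow_mul, pow_mul', neg_one_sq, one_pow]

theorem neg_one_pow_mul_prod_neg_pow {ι R : Type*} [Fintype ι] [CommRing R] (x : ι → R)
    (t : ι → ℕ) {N : ℕ} (h : ∑ i, t i ≤ N) :
    (-1) ^ N * ∏ i, (-x i) ^ t i = (-1) ^ (N - ∑ i, t i) * ∏ i, x i ^ t i := by
  obtain ⟨c, rfl⟩ := Nat.exists_eq_add_of_le h
  simp only [neg_pow (x _), prod_mul_distrib, prod_pow_eq_pow_sum, Nat.add_sub_cancel_left,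
    ← mul_assoc, ← pow_add]
  rw [add_right_comm, ← two_mul, pow_add, pow_mul, neg_one_sq, one_pow, one_mul]

theorem Fin.sum_le_sum_succ_mul {d : ℕ} (t : Fin d → ℕ) :
    ∑ j, t j ≤ ∑ j : Fin d, ((j : ℕ) + 1) * t j :=
  sum_le_sum fun j _ => Nat.le_mul_of_pos_left _ j.val.succ_pos

section

variable {R : Type*} [CommRing R]

theorem PowerSeries.coeff_succ_mul_one_sub_C_mul_X (f : R⟦X⟧) (a : R) (j : ℕ) :
    coeff (j + 1) (f * (1 - C a * X)) = coeff (j + 1) f - a * coeff j f := by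
  rw [mul_sub, mul_one, mul_left_comm, ← mul_assoc, map_sub, coeff_succ_mul_X, coeff_C_mul]

theorem PowerSeries.coeff_eq_sum_coeff_pow_of_mul_one_sub_eq_one {A B : R⟦X⟧}
    (h : A * (1 - B) = 1) (hB : constantCoeff B = 0) (s : ℕ) :
    coeff s A = ∑ m ∈ range (s + 1), coeff s (B ^ m) := by
  have hA : A = ∑ m ∈ range (s + 1), B ^ m + A * B ^ (s + 1) := by
    linear_combination (-A) * geom_sum_mul_neg B (s + 1) + (∑ m ∈ range (s + 1), B ^ m) * h
  have hX : X ^ (s + 1) ∣ A * B ^ (s + 1) :=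
    dvd_mul_of_dvd_right (pow_dvd_pow_of_dvd (X_dvd_iff.2 hB) _) _
  conv_lhs => rw [hA]
  rw [map_add, map_sum, X_pow_dvd_iff.1 hX s (lt_add_one s), add_zero]

theorem PowerSeries.coeff_pow_eq_coeff_trunc_pow (B : R⟦X⟧) {s d : ℕ} (h : s < d) (m : ℕ) :
    coeff s (B ^ m) = (trunc d B ^ m).coeff s := by
  calc coeff s (B ^ m) = (trunc d (B ^ m)).coeff s := by rw [coeff_trunc, if_pos h]
    _ = (trunc d ((trunc d B : R⟦X⟧) ^ m)).coeff s := by rw [trunc_trunc_pow]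
    _ = (trunc d B ^ m).coeff s := by
      rw [coeff_trunc, if_pos h, ← Polynomial.coe_pow, Polynomial.coeff_coe]

theorem PowerSeries.trunc_succ_eq_sum_fin {B : R⟦X⟧} (hB : constantCoeff B = 0) (s : ℕ) :
    trunc (s + 1) B =
      ∑ j : Fin s, Polynomial.C (coeff ((j : ℕ) + 1) B) * Polynomial.X ^ ((j : ℕ) + 1) := by
  rw [trunc_apply, ← range_eq_Ico, sum_range_succ',
    Fin.sum_univ_eq_sum_range (fun j => Polynomial.C (coeff (j + 1) B) * Polynomial.X ^ (j + 1))]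
  simp [hB, Polynomial.C_mul_X_pow_eq_monomial]

theorem Polynomial.coeff_sum_C_mul_X_pow_pow {ι : Type*} [Fintype ι] [DecidableEq ι]
    (b : ι → R) (w : ι → ℕ) (m s : ℕ) :
    ((∑ i, C (b i) * X ^ w i) ^ m).coeff s =
      ∑ t ∈ (piAntidiag univ m).filter (fun t => ∑ i, w i * t i = s),
        (Nat.multinomial univ t : R) * ∏ i, b i ^ t i := by
  rw [sum_pow_eq_sum_piAntidiag, finsetSum_coeff, sum_filter]
  refine sum_congr rfl fun t _ => ?_
  have hprod :
      ∏ i, (C (b i) * X ^ w i) ^ t i = C (∏ i, b i ^ t i) * X ^ (∑ i, w i * t i) := by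
    simp only [mul_pow, prod_mul_distrib, ← pow_mul, prod_pow_eq_pow_sum, map_prod, map_pow]
  rw [hprod, ← C_eq_natCast, ← mul_assoc, ← C_mul, coeff_C_mul_X_pow]
  exact if_congr eq_comm rfl rfl

theorem PowerSeries.coeff_eq_sum_multinomial_of_mul_one_sub_eq_one {A B : R⟦X⟧}
    (h : A * (1 - B) = 1) (hB : constantCoeff B = 0) (s : ℕ) :
    coeff s A = ∑ t ∈ univ.filter
        (fun t : Fin s → Fin (s + 1) => ∑ j : Fin s, ((j : ℕ) + 1) * (t j : ℕ) = s),
      (Nat.multinomial univ (fun j => (t j : ℕ)) : R) *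
        ∏ j : Fin s, coeff ((j : ℕ) + 1) B ^ (t j : ℕ) := by
  have hmaps : ∀ t ∈ univ.filter
      (fun t : Fin s → Fin (s + 1) => ∑ j : Fin s, ((j : ℕ) + 1) * (t j : ℕ) = s),
      ∑ j, (t j : ℕ) ∈ range (s + 1) := fun t ht =>
    mem_range.2 (Nat.lt_succ_of_le ((Fin.sum_le_sum_succ_mul _).trans (mem_filter.1 ht).2.le))
  rw [coeff_eq_sum_coeff_pow_of_mul_one_sub_eq_one h hB, ← sum_fiberwise_of_maps_to hmaps]
  refine sum_congr rfl fun m _ => ?_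
  rw [coeff_pow_eq_coeff_trunc_pow B (lt_add_one s), trunc_succ_eq_sum_fin hB,
    Polynomial.coeff_sum_C_mul_X_pow_pow]
  symm
  refine sum_nbij (fun t j => (t j : ℕ)) ?_ ?_ ?_ (fun _ _ => rfl)
  · intro t ht
    simp only [mem_filter] at ht
    simp [ht.1.2, ht.2]
  · intro t _ u _ htu
    funext j
    exact Fin.ext (congrFun htu j)
  · intro u hu
    rw [mem_coe, mem_filter, mem_piAntidiag] at hu
    have hle : ∀ j, u j < s + 1 := fun j => Nat.lt_succ_of_le <|
      (single_le_sum (fun i _ => Nat.zero_le (u i)) (mem_univ j)).trans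
        ((Fin.sum_le_sum_succ_mul u).trans hu.2.le)
    exact ⟨fun j => ⟨u j, hle j⟩, by simp [hu.1.1, hu.2], rfl⟩

end

theorem Real.coe_fib_add (a b : ℕ) :
    (Nat.fib (a + b) : ℝ) = ψ ^ b * Nat.fib a + φ ^ a * Nat.fib b := by
  have h5 : √5 ≠ 0 := by positivity
  rw [Real.coe_fib_eq, Real.coe_fib_eq, Real.coe_fib_eq, pow_add]
  field_simp
  ring

theorem Nat.cast_fib_succ_ne_zero (m : ℕ) : (Nat.fib (m + 1) : ℝ) ≠ 0 :=
  Nat.cast_ne_zero.2 (Nat.fib_pos.2 m.succ_pos).ne'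

theorem fibonomial_zero_right (n : ℕ) : fibonomial n 0 = 1 := by
  simp [fibonomial]

theorem fibonomial_eq_zero_of_lt {n k : ℕ} (h : n < k) : fibonomial n k = 0 :=
  prod_eq_zero (mem_range.2 h) (by simp)

theorem fibonomial_succ_right (m k : ℕ) :
    fibonomial m (k + 1) = fibonomial m k * Nat.fib (m - k) / Nat.fib (k + 1) := by
  rw [fibonomial, prod_range_succ, ← fibonomial, mul_div_assoc]

theorem fibonomial_succ_succ_mul (m k : ℕ) :
    fibonomial (m + 1) (k + 1) * Nat.fib (k + 1) = Nat.fib (m + 1) * fibonomial m k := by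
  have hP : ∏ r ∈ range k, (Nat.fib (r + 1) : ℝ) ≠ 0 :=
    prod_ne_zero_iff.2 fun r _ => Nat.cast_fib_succ_ne_zero r
  simp only [fibonomial, prod_div_distrib]
  rw [prod_range_succ' (fun r => (Nat.fib (m + 1 - r) : ℝ)), prod_range_succ _ k]
  simp only [Nat.add_sub_add_right, Nat.sub_zero]
  field_simp [Nat.cast_fib_succ_ne_zero k]

theorem fibonomial_self (m : ℕ) : fibonomial m m = 1 := by
  induction m with
  | zero => exact fibonomial_zero_right 0
  | succ m ih =>
    simpa [ih, Nat.cast_fib_succ_ne_zero m] using fibonomial_succ_succ_mul m m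

theorem fibonomial_succ_succ_of_fib_eq {m k : ℕ} {α β : ℝ}
    (h : (Nat.fib (m + 1) : ℝ) = α * Nat.fib (m - k) + β * Nat.fib (k + 1)) :
    fibonomial (m + 1) (k + 1) = α * fibonomial m (k + 1) + β * fibonomial m k := by
  have hF := Nat.cast_fib_succ_ne_zero k
  apply mul_right_cancel₀ hF
  rw [fibonomial_succ_succ_mul, fibonomial_succ_right, h]
  field_simp

theorem fibonomial_add_succ_succ (n j : ℕ) :
    fibonomial (n + j + 1) (n + 1) =
      φ ^ (n + 1) * fibonomial (n + j) (n + 1) + ψ ^ j * fibonomial (n + j) n := by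
  refine fibonomial_succ_succ_of_fib_eq ?_
  rw [Nat.add_sub_cancel_left, add_right_comm, Real.coe_fib_add]
  ring

theorem fibonomial_add_two_succ (n K : ℕ) :
    fibonomial (n + 2) (K + 1) =
      ψ ^ (K + 1) * fibonomial (n + 1) (K + 1) +
        φ ^ (n + 1) * (-ψ) ^ K * fibonomial (n + 1) K := by
  rcases le_or_gt K (n + 1) with hK | hK
  · refine fibonomial_succ_succ_of_fib_eq ?_
    have hφ : φ ^ (n + 1) * (-ψ) ^ K = φ ^ (n + 1 - K) := by
      rw [← Nat.sub_add_cancel hK, pow_add, mul_assoc, ← mul_pow, mul_neg,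
        Real.goldenRatio_mul_goldenConj, neg_neg, one_pow, mul_one, Nat.add_sub_cancel]
    rw [hφ, ← Real.coe_fib_add, show n + 1 - K + (K + 1) = n + 1 + 1 by omega]
  · rw [fibonomial_eq_zero_of_lt (by omega), fibonomial_eq_zero_of_lt (by omega),
      fibonomial_eq_zero_of_lt hK]
    ring

noncomputable def fibCompleteSeries (n : ℕ) : ℝ⟦X⟧ :=
  mk fun j => fibonomial (n + j) n

-- `∑ (-1) ^ k e_k X ^ k`: the exponent adds `k` to that of the sign of `e_k`.
noncomputable def fibElementarySeries (n : ℕ) : ℝ⟦X⟧ :=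
  mk fun k => (-1) ^ (k * (k - 1) / 2 + k) * fibonomial (n + 1) k

theorem fibCompleteSeries_succ_mul (n : ℕ) :
    fibCompleteSeries (n + 1) * (1 - C (φ ^ (n + 1)) * X) =
      rescale ψ (fibCompleteSeries n) := by
  ext (_ | j)
  · simp [fibCompleteSeries, fibonomial_self]
  · simp only [coeff_succ_mul_one_sub_C_mul_X, fibCompleteSeries, coeff_rescale, coeff_mk]
    rw [show n + 1 + (j + 1) = n + (j + 1) + 1 by ring, fibonomial_add_succ_succ,
      show n + 1 + j = n + (j + 1) by ring]
    ring

theorem fibElementarySeries_succ (n : ℕ) :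
    fibElementarySeries (n + 1) =
      rescale ψ (fibElementarySeries n) * (1 - C (φ ^ (n + 1)) * X) := by
  ext (_ | K)
  · simp [fibElementarySeries, rescale_mk, fibonomial_zero_right]
  · simp only [coeff_succ_mul_one_sub_C_mul_X, fibElementarySeries, coeff_rescale, coeff_mk]
    rw [fibonomial_add_two_succ, Nat.triangle_succ, neg_pow ψ]
    linear_combination -(-1 : ℝ) ^ (K * (K - 1) / 2 + K) * φ ^ (n + 1) * ψ ^ K *
      fibonomial (n + 1) K * neg_one_pow_sq (R := ℝ) K

theorem fibElementarySeries_mul_fibCompleteSeries (n : ℕ) :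
    fibElementarySeries n * fibCompleteSeries n = 1 := by
  induction n with
  | zero =>
    have hE : fibElementarySeries 0 = 1 - X := by
      ext (_ | _ | k)
      · simp [fibElementarySeries, fibonomial_zero_right]
      · simp [fibElementarySeries, fibonomial_self]
      · simp [fibElementarySeries, fibonomial_eq_zero_of_lt, coeff_X]
    have hH : fibCompleteSeries 0 = PowerSeries.mk 1 := by
      ext j
      simp [fibCompleteSeries, fibonomial_zero_right]
    rw [hE, hH, mul_comm, mk_one_mul_one_sub_eq_one]
  | succ n ih =>
    calc fibElementarySeries (n + 1) * fibCompleteSeries (n + 1)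
        = rescale ψ (fibElementarySeries n) *
            (fibCompleteSeries (n + 1) * (1 - C (φ ^ (n + 1)) * X)) := by
          rw [fibElementarySeries_succ]; ring
      _ = 1 := by rw [fibCompleteSeries_succ_mul, ← map_mul, ih, map_one]

/- The sum ranges over all tuples `(t_1, …, t_k)` of nonnegative integers with
`t_1 + 2 t_2 + ⋯ + k t_k = k`; such tuples necessarily have each `t_j ≤ k`,
so they are faithfully encoded as functions `Fin k → Fin (k+1)`. -/
theorem fibonomial_trudi_general (n k : ℕ) :
    fibonomial (n + 1) k =
      ∑ t ∈ Finset.univ.filter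
          (fun t : Fin k → Fin (k + 1) => ∑ j : Fin k, ((j : ℕ) + 1) * ((t j : ℕ)) = k),
        (((∑ j : Fin k, (t j : ℕ)).factorial : ℝ) / ∏ j : Fin k, ((t j : ℕ).factorial : ℝ)) *
          (-1 : ℝ) ^ (k * (k - 1) / 2 + k - ∑ j : Fin k, (t j : ℕ)) *
          ∏ j : Fin k, (fibonomial (n + ((j : ℕ) + 1)) n) ^ (t j : ℕ) := by
  have hEH : fibElementarySeries n * (1 - (1 - fibCompleteSeries n)) = 1 := by
    rw [sub_sub_cancel, fibElementarySeries_mul_fibCompleteSeries]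
  have hB : constantCoeff (1 - fibCompleteSeries n) = 0 := by
    simp [fibCompleteSeries, fibonomial_self]
  have htrudi := coeff_eq_sum_multinomial_of_mul_one_sub_eq_one hEH hB k
  simp only [fibElementarySeries, fibCompleteSeries, coeff_mk, map_sub, coeff_one,
    Nat.add_one_ne_zero, if_false, zero_sub] at htrudi
  calc fibonomial (n + 1) k
      = (-1) ^ (k * (k - 1) / 2 + k) * ((-1) ^ (k * (k - 1) / 2 + k) * fibonomial (n + 1) k) := by
        linear_combination (-fibonomial (n + 1) k) * neg_one_pow_sq (R := ℝ) (k * (k - 1) / 2 + k)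
    _ = _ := by
      rw [htrudi, mul_sum]
      refine sum_congr rfl fun t ht => ?_
      have hle : ∑ j, (t j : ℕ) ≤ k * (k - 1) / 2 + k :=
        (Fin.sum_le_sum_succ_mul _).trans ((mem_filter.1 ht).2.le.trans (Nat.le_add_left k _))
      rw [Nat.cast_multinomial, mul_left_comm, neg_one_pow_mul_prod_neg_pow _ _ hle]
      ring

theorem fibonomial_trudi (n k : ℕ) (hk : 1 ≤ k) :
    fibonomial (n + 1) k =
      ∑ t ∈ Finset.univ.filter
          (fun t : Fin k → Fin (k + 1) => ∑ j : Fin k, ((j : ℕ) + 1) * ((t j : ℕ)) = k),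
        (((∑ j : Fin k, (t j : ℕ)).factorial : ℝ) / ∏ j : Fin k, ((t j : ℕ).factorial : ℝ)) *
          (-1 : ℝ) ^ (k * (k - 1) / 2 + k - ∑ j : Fin k, (t j : ℕ)) *
          ∏ j : Fin k, (fibonomial (n + ((j : ℕ) + 1)) n) ^ (t j : ℕ) :=
  fibonomial_trudi_general n k
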